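/- arXiv:2105.04275 — 2 statements merged into one kernel-verified Lean document; each statement's English description precedes it below -/
import Mathlib

section
/- Define K₂(ρ) = (ρ/2+1)·π/2 + ((ρ+1)²/(4ρ))·((ρ−1)/(ρ+1))^{3/2} + (ρ/2+1)·[((ρ+1)/(2ρ))·((ρ−1)/(ρ+1))^{1/2} − arctan((ρ−1)/(ρ+1))] for ρ > 1. Then lim_{ρ → +∞} K₂(ρ)/ρ = (4+π)/8. -/
open Real Filter

noncomputable def K₂ (ρ : ℝ) : ℝ :=
  (ρ / 2 + 1) * (π / 2) + ((ρ + 1) ^ 2 / (4 * ρ)) * ((ρ - 1) / (ρ + 1)) ^ ((3:ℝ) / 2) +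
    (ρ / 2 + 1) * (((ρ + 1) / (2 * ρ)) * ((ρ - 1) / (ρ + 1)) ^ ((1:ℝ) / 2) -
      Real.arctan ((ρ - 1) / (ρ + 1)))

noncomputable def g₂ (x : ℝ) : ℝ :=
  (1 / 2 + x) * (π / 2) + ((1 + x) ^ 2 / 4) * ((1 - x) / (1 + x)) ^ ((3:ℝ) / 2) +
    (1 / 2 + x) * (((1 + x) / 2) * ((1 - x) / (1 + x)) ^ ((1:ℝ) / 2) -
      Real.arctan ((1 - x) / (1 + x)))

theorem stmt_14 : Tendsto (fun ρ => K₂ ρ / ρ) atTop (nhds ((4 + π) / 8)) := by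
  have hratio : ContinuousAt (fun x : ℝ => (1 - x) / (1 + x)) 0 := by
    apply ContinuousAt.div
    · fun_prop
    · fun_prop
    · norm_num
  have hg : ContinuousAt g₂ 0 := by
    unfold g₂
    apply ContinuousAt.add
    apply ContinuousAt.add
    · fun_prop
    · exact (by fun_prop : ContinuousAt (fun x : ℝ => (1 + x) ^ 2 / 4) 0).mul
        (hratio.rpow_const (by norm_num))
    · exact (by fun_prop : ContinuousAt (fun x : ℝ => 1 / 2 + x) 0).mul
        (((by fun_prop : ContinuousAt (fun x : ℝ => (1 + x) / 2) 0).mul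
          (hratio.rpow_const (by norm_num))).sub (Real.continuous_arctan.continuousAt.comp hratio))
  have hg0 : g₂ 0 = (4 + π) / 8 := by
    unfold g₂
    norm_num [Real.one_rpow, Real.arctan_one]
    ring
  have hcomp : Tendsto (fun ρ : ℝ => g₂ (1 / ρ)) atTop (nhds ((4 + π) / 8)) := by
    rw [← hg0]
    have h : Tendsto (fun ρ : ℝ => 1 / ρ) atTop (nhds 0) := by
      simpa only [one_div] using (tendsto_inv_atTop_zero : Tendsto (fun r : ℝ => r⁻¹) atTop (nhds 0))
    exact hg.tendsto.comp h
  refine hcomp.congr' ?_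
  filter_upwards [eventually_gt_atTop (1 : ℝ)] with ρ hρ
  have h0 : ρ ≠ 0 := by linarith
  have h1 : ρ + 1 ≠ 0 := by linarith
  have harg : (1 - 1 / ρ) / (1 + 1 / ρ) = (ρ - 1) / (ρ + 1) := by
    rw [div_eq_div_iff]
    · field_simp
    · positivity
    · exact h1
  unfold g₂ K₂
  rw [harg]
  field_simp
end

section
/- Let n ≥ 1 and ρ > 0, and for integration by parts let f(t) = t^{ρ/2+n−1} and ψ_ρ(t) = (−1)ⁿ dⁿ/dtⁿ [1/(1+t^ρ)]. Then (1/(n−1)!) ∫₀^∞ t^{ρ/2+n−1} ψ_ρ(t) dt = (π/2) ∏_{k=1}^{n−1} (1 + ρ/(2k)), provided ρ > 1 so that all boundary terms vanish. -/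
/-!
Write `φ(t) = 1 / (1 + t ^ ρ)`. On `(0, ∞)` its `k`-th derivative is
`P_k(t ^ ρ) / ((1 + t ^ ρ) ^ (k + 1) * t ^ k)` with `deg P_k ≤ k`, so
`t ^ (c + k) * φ⁽ᵏ⁾(t) = O(t ^ c / (1 + t ^ ρ))` uniformly in `t > 0`. Taking `c = ρ / 2` shows
that the moments `J_k = ∫₀^∞ t ^ (ρ/2 + k - 1) φ⁽ᵏ⁾(t) dt` converge absolutely and that the
boundary terms of an integration by parts vanish at both ends, so `J_{k+1} = -(ρ/2 + k) J_k`. The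
substitution
`y = t ^ (ρ/2)` turns `J_0` into `(2/ρ) ∫₀^∞ dy / (1 + y²) = π / ρ`, and dividing
`(-1)ⁿ J_n = (π/ρ) ∏_{j<n} (ρ/2 + j)` by `(n-1)!` gives the product.
-/

open Real MeasureTheory Set Polynomial Filter Topology

namespace Polynomial

theorem natDegree_X_mul_derivative_le {R : Type*} [Semiring R] (p : R[X]) :
    (X * derivative p).natDegree ≤ p.natDegree := by
  rcases Nat.eq_zero_or_pos p.natDegree with h | h
  · simp [derivative_of_natDegree_zero h]
  · exact (natDegree_mul_le_of_le natDegree_X_le (natDegree_derivative_le p)).trans (by omega)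

theorem abs_eval_le_mul_one_add_pow (P : ℝ[X]) {k : ℕ} (hk : P.natDegree ≤ k) :
    ∃ M, 0 ≤ M ∧ ∀ u : ℝ, 0 ≤ u → |P.eval u| ≤ M * (1 + u) ^ k := by
  refine ⟨∑ i ∈ Finset.range (k + 1), |P.coeff i|, by positivity, fun u hu => ?_⟩
  rw [eval_eq_sum_range' (Nat.lt_succ_of_le hk), Finset.sum_mul]
  refine (Finset.abs_sum_le_sum_abs _ _).trans (Finset.sum_le_sum fun i hi => ?_)
  rw [abs_mul, abs_pow, abs_of_nonneg hu]
  gcongr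
  calc u ^ i ≤ (1 + u) ^ i := by gcongr; linarith
    _ ≤ (1 + u) ^ k :=
      pow_le_pow_right₀ (by linarith) (Nat.lt_succ_iff.mp (Finset.mem_range.mp hi))

end Polynomial

theorem Real.rpow_div_two_sq {x : ℝ} (hx : 0 ≤ x) (ρ : ℝ) : (x ^ (ρ / 2)) ^ 2 = x ^ ρ := by
  rw [← rpow_natCast, ← rpow_mul hx]
  norm_num

theorem integrableOn_rpow_div_two_sub_one_mul_inv_one_add_rpow {ρ : ℝ} (hρ : 0 < ρ) :
    IntegrableOn (fun t : ℝ => t ^ (ρ / 2 - 1) * (1 + t ^ ρ)⁻¹) (Ioi 0) := by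
  refine ((integrableOn_Ioi_comp_rpow_iff' (fun y : ℝ => (1 + y ^ 2)⁻¹) (p := ρ / 2)
    (by positivity)).mpr integrable_inv_one_add_sq.integrableOn).congr_fun (fun t ht => ?_)
    measurableSet_Ioi
  simp [rpow_div_two_sq (le_of_lt ht)]

theorem integral_rpow_div_two_sub_one_mul_inv_one_add_rpow {ρ : ℝ} (hρ : 0 < ρ) :
    ∫ t in Ioi (0 : ℝ), t ^ (ρ / 2 - 1) * (1 + t ^ ρ)⁻¹ = π / ρ := by
  have h := integral_comp_rpow_Ioi_of_pos (g := fun y : ℝ => (1 + y ^ 2)⁻¹) (half_pos hρ)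
  rw [integral_Ioi_inv_one_add_sq, arctan_zero, sub_zero,
    setIntegral_congr_fun measurableSet_Ioi
      (g := fun t => ρ / 2 * (t ^ (ρ / 2 - 1) * (1 + t ^ ρ)⁻¹))
      (fun t ht => by simp [rpow_div_two_sq (le_of_lt ht), mul_assoc]),
    integral_const_mul] at h
  field_simp at h ⊢
  linarith

namespace InvOneAddRpow

/-- With `u = t ^ ρ` (so that `t u' = ρ u`), differentiating `P(u) / ((1 + u) ^ (k + 1) * t ^ k)`
gives the next numerator over `(1 + u) ^ (k + 2) * t ^ (k + 1)`. -/
noncomputable def numerator (ρ : ℝ) : ℕ → ℝ[X]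
  | 0 => 1
  | k + 1 => C ρ * (X * derivative (numerator ρ k) * (1 + X) - C ((k : ℝ) + 1) * X * numerator ρ k)
      - C (k : ℝ) * (1 + X) * numerator ρ k

theorem natDegree_numerator_le (ρ : ℝ) (k : ℕ) : (numerator ρ k).natDegree ≤ k := by
  induction k with
  | zero => simp [numerator]
  | succ k ih =>
    set P := numerator ρ k
    have h1X : (1 + X : ℝ[X]).natDegree ≤ 1 := by compute_degree
    have hCX (c : ℝ) : (C c * X).natDegree ≤ 1 := by compute_degree
    have hA : (X * derivative P * (1 + X)).natDegree ≤ k + 1 :=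
      natDegree_mul_le_of_le ((natDegree_X_mul_derivative_le P).trans ih) h1X
    have hB : (C ((k : ℝ) + 1) * X * P).natDegree ≤ k + 1 :=
      (natDegree_mul_le_of_le (hCX _) ih).trans_eq (add_comm 1 k)
    have hC : (C (k : ℝ) * (1 + X) * P).natDegree ≤ k + 1 :=
      (natDegree_mul_le_of_le ((natDegree_C_mul_le _ _).trans h1X) ih).trans_eq (add_comm 1 k)
    exact (natDegree_sub_le_of_le ((natDegree_C_mul_le _ _).trans (natDegree_sub_le_of_le hA hB))
      hC).trans (by simp)

noncomputable def iterDeriv (ρ : ℝ) (k : ℕ) (t : ℝ) : ℝ :=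
  (numerator ρ k).eval (t ^ ρ) / ((1 + t ^ ρ) ^ (k + 1) * t ^ (k : ℝ))

theorem hasDerivAt_iterDeriv (ρ : ℝ) (k : ℕ) {t : ℝ} (ht : 0 < t) :
    HasDerivAt (iterDeriv ρ k) (iterDeriv ρ (k + 1) t) t := by
  have hu : HasDerivAt (fun x : ℝ => x ^ ρ) (ρ * t ^ (ρ - 1)) t :=
    hasDerivAt_rpow_const (Or.inl ht.ne')
  have hnum : HasDerivAt (fun x : ℝ => (numerator ρ k).eval (x ^ ρ))
      ((derivative (numerator ρ k)).eval (t ^ ρ) * (ρ * t ^ (ρ - 1))) t :=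
    (numerator ρ k).hasDerivAt (t ^ ρ) |>.comp (h := fun x : ℝ => x ^ ρ) t hu
  have hden : HasDerivAt (fun x : ℝ => (1 + x ^ ρ) ^ (k + 1) * x ^ (k : ℝ))
      (((k + 1 : ℕ) : ℝ) * (1 + t ^ ρ) ^ k * (ρ * t ^ (ρ - 1)) * t ^ (k : ℝ)
        + (1 + t ^ ρ) ^ (k + 1) * (k * t ^ ((k : ℝ) - 1))) t :=
    ((hu.const_add 1).pow (k + 1)).mul (hasDerivAt_rpow_const (Or.inl ht.ne'))
  refine (hnum.div hden (by positivity)).congr_deriv ?_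
  simp only [iterDeriv, numerator, eval_sub, eval_mul, eval_add, eval_one, eval_C, eval_X,
    Nat.cast_succ]
  rw [rpow_sub_one ht.ne', rpow_sub_one ht.ne', rpow_add_one ht.ne']
  field_simp
  ring

theorem iteratedDeriv_eq_iterDeriv (ρ : ℝ) (k : ℕ) {t : ℝ} (ht : 0 < t) :
    iteratedDeriv k (fun x : ℝ => 1 / (1 + x ^ ρ)) t = iterDeriv ρ k t := by
  induction k generalizing t with
  | zero => simp [iterDeriv, numerator]
  | succ k ih =>
    have hclosed : iteratedDeriv k (fun x : ℝ => 1 / (1 + x ^ ρ)) =ᶠ[𝓝 t] iterDeriv ρ k :=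
      (eventually_gt_nhds ht).mono fun x hx => ih hx
    rw [iteratedDeriv_succ, hclosed.deriv_eq, (hasDerivAt_iterDeriv ρ k ht).deriv]

theorem exists_abs_rpow_add_mul_iterDeriv_le (ρ : ℝ) (k : ℕ) :
    ∃ M, 0 ≤ M ∧ ∀ c t : ℝ, 0 < t →
      |t ^ (c + k) * iterDeriv ρ k t| ≤ M * (t ^ c * (1 + t ^ ρ)⁻¹) := by
  obtain ⟨M, hM0, hM⟩ := (numerator ρ k).abs_eval_le_mul_one_add_pow (natDegree_numerator_le ρ k)
  refine ⟨M, hM0, fun c t ht => ?_⟩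
  have hsplit : t ^ (c + k) * iterDeriv ρ k t
      = t ^ c * (1 + t ^ ρ)⁻¹ * ((numerator ρ k).eval (t ^ ρ) / (1 + t ^ ρ) ^ k) := by
    rw [iterDeriv, rpow_add ht]
    field_simp
    ring
  rw [hsplit, abs_mul, abs_of_pos (by positivity), abs_div,
    abs_of_pos (by positivity : (0 : ℝ) < (1 + t ^ ρ) ^ k), mul_comm M]
  gcongr
  rw [div_le_iff₀ (by positivity)]
  exact hM _ (by positivity)

theorem integrableOn_rpow_mul_iterDeriv {ρ : ℝ} (hρ : 0 < ρ) (k : ℕ) :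
    IntegrableOn (fun t => t ^ (ρ / 2 + k - 1) * iterDeriv ρ k t) (Ioi 0) := by
  obtain ⟨M, -, hM⟩ := exists_abs_rpow_add_mul_iterDeriv_le ρ k
  have hcont : ContinuousOn (fun t => t ^ (ρ / 2 + k - 1) * iterDeriv ρ k t) (Ioi 0) :=
    fun t ht => ((continuousAt_rpow_const t _ (Or.inl (ne_of_gt ht))).mul
      (hasDerivAt_iterDeriv ρ k ht).continuousAt).continuousWithinAt
  refine ((integrableOn_rpow_div_two_sub_one_mul_inv_one_add_rpow hρ).const_mul M).mono'
    (hcont.aestronglyMeasurable measurableSet_Ioi) ?_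
  filter_upwards [ae_restrict_mem measurableSet_Ioi] with t ht
  simpa [show ρ / 2 + k - 1 = ρ / 2 - 1 + k by ring] using hM (ρ / 2 - 1) t ht

theorem tendsto_rpow_mul_iterDeriv_nhdsGT_zero {ρ : ℝ} (hρ : 0 < ρ) (k : ℕ) :
    Tendsto (fun t => t ^ (ρ / 2 + k) * iterDeriv ρ k t) (𝓝[>] 0) (𝓝 0) := by
  obtain ⟨M, hM0, hM⟩ := exists_abs_rpow_add_mul_iterDeriv_le ρ k
  have hlim : Tendsto (fun t : ℝ => M * t ^ (ρ / 2)) (𝓝[>] 0) (𝓝 0) := by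
    simpa [zero_rpow (half_pos hρ).ne'] using
      ((continuousAt_rpow_const 0 (ρ / 2) (Or.inr (half_pos hρ).le)).tendsto.const_mul M).mono_left
        nhdsWithin_le_nhds
  refine squeeze_zero_norm' ?_ hlim
  filter_upwards [self_mem_nhdsWithin] with t (ht : 0 < t)
  refine (hM _ t ht).trans (mul_le_mul_of_nonneg_left ?_ hM0)
  exact mul_le_of_le_one_right (by positivity) (inv_le_one_of_one_le₀ (by simp; positivity))

theorem tendsto_rpow_mul_iterDeriv_atTop {ρ : ℝ} (hρ : 0 < ρ) (k : ℕ) :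
    Tendsto (fun t => t ^ (ρ / 2 + k) * iterDeriv ρ k t) atTop (𝓝 0) := by
  obtain ⟨M, hM0, hM⟩ := exists_abs_rpow_add_mul_iterDeriv_le ρ k
  have hlim : Tendsto (fun t : ℝ => M * t ^ (-(ρ / 2))) atTop (𝓝 0) := by
    simpa using (tendsto_rpow_neg_atTop (half_pos hρ)).const_mul M
  refine squeeze_zero_norm' ?_ hlim
  filter_upwards [eventually_gt_atTop 0] with t ht
  refine (hM _ t ht).trans (mul_le_mul_of_nonneg_left ?_ hM0)
  calc t ^ (ρ / 2) * (1 + t ^ ρ)⁻¹ ≤ t ^ (ρ / 2) * (t ^ ρ)⁻¹ := by gcongr; linarith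
    _ = t ^ (-(ρ / 2)) := by rw [← rpow_neg ht.le, ← rpow_add ht]; ring_nf

noncomputable def moment (ρ : ℝ) (k : ℕ) : ℝ :=
  ∫ t in Ioi (0 : ℝ), t ^ (ρ / 2 + k - 1) * iterDeriv ρ k t

theorem moment_succ {ρ : ℝ} (hρ : 0 < ρ) (k : ℕ) :
    moment ρ (k + 1) = -(ρ / 2 + k) * moment ρ k := by
  have hexp : ρ / 2 + ((k + 1 : ℕ) : ℝ) - 1 = ρ / 2 + k := by push_cast; ring
  have hparts := integral_Ioi_mul_deriv_eq_deriv_mul (a := 0) (a' := 0) (b' := 0)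
    (u := fun t => t ^ (ρ / 2 + k)) (u' := fun t => (ρ / 2 + k) * t ^ (ρ / 2 + k - 1))
    (v := iterDeriv ρ k) (v' := iterDeriv ρ (k + 1))
    (fun t ht => hasDerivAt_rpow_const (Or.inl (ne_of_gt ht)))
    (fun t ht => hasDerivAt_iterDeriv ρ k ht)
    (by simpa only [Pi.mul_def, hexp] using integrableOn_rpow_mul_iterDeriv hρ (k + 1))
    (by simp only [Pi.mul_def, mul_assoc]; exact (integrableOn_rpow_mul_iterDeriv hρ k).const_mul _)
    (tendsto_rpow_mul_iterDeriv_nhdsGT_zero hρ k) (tendsto_rpow_mul_iterDeriv_atTop hρ k)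
  simp only [mul_assoc, integral_const_mul, zero_sub] at hparts
  rw [moment, hexp, hparts, moment]
  ring

theorem moment_eq {ρ : ℝ} (hρ : 0 < ρ) (n : ℕ) :
    moment ρ n = (-1) ^ n * (π / ρ) * ∏ j ∈ Finset.range n, (ρ / 2 + j) := by
  induction n with
  | zero =>
    simpa [moment, iterDeriv, numerator] using integral_rpow_div_two_sub_one_mul_inv_one_add_rpow hρ
  | succ n ih =>
    rw [moment_succ hρ, ih, Finset.prod_range_succ, pow_succ]
    ring

end InvOneAddRpow

theorem Finset.prod_range_add_succ_eq_factorial_mul (a : ℝ) (m : ℕ) :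
    ∏ j ∈ Finset.range m, (a + (j + 1)) =
      m.factorial * ∏ j ∈ Finset.range m, (1 + a / (j + 1)) := by
  induction m with
  | zero => simp
  | succ m ih =>
    rw [Finset.prod_range_succ, ih, Finset.prod_range_succ, Nat.factorial_succ]
    push_cast
    field_simp
    ring

theorem stmt_19 (n : ℕ) (hn : 1 ≤ n) (ρ : ℝ) (hρ : 1 < ρ) :
    (1 / (Nat.factorial (n - 1) : ℝ)) *
        ∫ t in Set.Ioi (0:ℝ), t ^ (ρ / 2 + n - 1) *
          ((-1 : ℝ) ^ n * iteratedDeriv n (fun x : ℝ => 1 / (1 + x ^ ρ)) t) =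
      (π / 2) * ∏ k ∈ Finset.range (n - 1), (1 + ρ / (2 * ((k : ℝ) + 1))) := by
  have hρ0 : 0 < ρ := by linarith
  obtain ⟨m, rfl⟩ : ∃ m, n = m + 1 := ⟨n - 1, by omega⟩
  have hintegral : ∫ t in Ioi (0 : ℝ), t ^ (ρ / 2 + ↑(m + 1) - 1) *
      ((-1 : ℝ) ^ (m + 1) * iteratedDeriv (m + 1) (fun x : ℝ => 1 / (1 + x ^ ρ)) t)
      = (-1) ^ (m + 1) * InvOneAddRpow.moment ρ (m + 1) := by
    rw [InvOneAddRpow.moment, ← integral_const_mul]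
    refine setIntegral_congr_fun measurableSet_Ioi fun t ht => ?_
    rw [InvOneAddRpow.iteratedDeriv_eq_iterDeriv ρ _ ht]
    ring
  rw [hintegral, InvOneAddRpow.moment_eq hρ0, Finset.prod_range_succ', Nat.add_sub_cancel]
  simp only [Nat.cast_succ, Nat.cast_zero, add_zero, Finset.prod_range_add_succ_eq_factorial_mul,
    div_div]
  field_simp
  rw [pow_right_comm, neg_one_sq, one_pow]
end
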